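/- arXiv:2603.22364 — 2 statements merged into one kernel-verified Lean document; each statement's English description precedes it below -/
import Mathlib

section
/- Let μ be a σ-finite measure on a measurable space X, let p_c, p_u, and p_ref be strictly positive probability densities with respect to μ, let β > 0, and let σ(w) = 1/(1+e^{−w}) denote the sigmoid function. Suppose Z̃ = ∫ p_ref(x) (p_c(x)/p_u(x))^{1/β} dμ(x) is finite, and define p*(x) = p_ref(x) (p_c(x)/p_u(x))^{1/β} / Z̃. Then for every strictly positive probability density q with respect to μ, ∫∫ log σ(β log(q(x)/p_ref(x)) − β log(q(y)/p_ref(y))) p_c(x) p_u(y) dμ(x) dμ(y) ≤ ∫∫ log σ(β log(p*(x)/p_ref(x)) − β log(p*(y)/p_ref(y))) p_c(x) p_u(y) dμ(x) dμ(y), where both double integrals take values in [−∞, 0]. -/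
/-! The DPO loss of a reward `r` decouples over unordered pairs `{x, y}`: the pair contributes
`a (-log σ w) + b (-log σ (-w))` with `a = p_c(x) p_u(y)`, `b = p_c(y) p_u(x)` and
`w = r(x) - r(y)`. Since `σ(-w) = 1 - σ(w)`, this is a binary cross-entropy, minimal by Gibbs'
inequality when `σ(w) = a / (a + b)`, i.e. `w = log (a / b)`. The reward of `p*` is
`log (p_c / p_u)` up to the additive constant `-β log Z̃`, so it attains this minimum for every
pair at once. -/

open MeasureTheory Real ENNReal

noncomputable def sigmoid (w : ℝ) : ℝ := 1 / (1 + Real.exp (-w))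

open Function

theorem sigmoid_eq_real_sigmoid : _root_.sigmoid = Real.sigmoid :=
  funext fun _ => one_div _

namespace Real

theorem sigmoid_log_div {a b : ℝ} (ha : 0 < a) (hb : 0 < b) :
    sigmoid (log (a / b)) = a / (a + b) := by
  rw [sigmoid_def, ← log_inv, exp_log (by positivity), inv_div]
  field_simp

theorem mul_log_div_le_sub {a u : ℝ} (ha : 0 < a) (hu : 0 < u) : a * log (u / a) ≤ u - a :=
  calc a * log (u / a) ≤ a * (u / a - 1) :=
        mul_le_mul_of_nonneg_left (log_le_sub_one_of_pos (by positivity)) ha.le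
    _ = u - a := by field_simp

theorem mul_log_add_mul_log_one_sub_le {a b p : ℝ} (ha : 0 < a) (hb : 0 < b) (hp : 0 < p)
    (hp1 : p < 1) :
    a * log p + b * log (1 - p) ≤ a * log (a / (a + b)) + b * log (b / (a + b)) := by
  have hab : 0 < a + b := by linarith
  have hlog : ∀ {c t : ℝ}, 0 < c → 0 < t →
      log (t * (a + b) / c) = log t - log (c / (a + b)) := fun hc ht => by
    rw [← log_div ht.ne' (by positivity)]
    congr 1
    field_simp
  have h₁ := mul_log_div_le_sub ha (mul_pos hp hab)
  have h₂ := mul_log_div_le_sub hb (mul_pos (sub_pos.2 hp1) hab)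
  rw [hlog ha hp] at h₁
  rw [hlog hb (sub_pos.2 hp1)] at h₂
  nlinarith

theorem binary_logistic_loss_le {a b : ℝ} (ha : 0 < a) (hb : 0 < b) (w : ℝ) :
    a * -log (sigmoid (log (a / b))) + b * -log (sigmoid (-log (a / b))) ≤
      a * -log (sigmoid w) + b * -log (sigmoid (-w)) := by
  have hb' : 1 - a / (a + b) = b / (a + b) := by field_simp; ring
  rw [sigmoid_neg, sigmoid_neg, sigmoid_log_div ha hb, hb']
  linarith [mul_log_add_mul_log_one_sub_le ha hb (sigmoid_pos w) (sigmoid_lt_one w)]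

end Real

namespace MeasureTheory

variable {α : Type*} [MeasurableSpace α] {μ : Measure α}

theorem integral_pos_of_pos [NeZero μ] {f : α → ℝ} (hf : Integrable f μ)
    (hpos : ∀ x, 0 < f x) : 0 < ∫ x, f x ∂μ := by
  rw [integral_pos_iff_support_of_nonneg (fun x => (hpos x).le) hf,
    support_eq_univ fun x => (hpos x).ne']
  exact Measure.measure_univ_pos.2 (NeZero.ne μ)

theorem lintegral_lintegral_add_swap [SFinite μ] {f : α → α → ℝ≥0∞}
    (hf : Measurable (uncurry f)) :
    ∫⁻ x, ∫⁻ y, (f x y + f y x) ∂μ ∂μ = 2 * ∫⁻ x, ∫⁻ y, f x y ∂μ ∂μ := by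
  have hswap : ∫⁻ x, ∫⁻ y, f y x ∂μ ∂μ = ∫⁻ x, ∫⁻ y, f x y ∂μ ∂μ :=
    (lintegral_lintegral_swap hf.aemeasurable).symm
  calc ∫⁻ x, ∫⁻ y, (f x y + f y x) ∂μ ∂μ
      = ∫⁻ x, (∫⁻ y, f x y ∂μ + ∫⁻ y, f y x ∂μ) ∂μ :=
        lintegral_congr fun x => lintegral_add_left (hf.comp measurable_prodMk_left) _
    _ = ∫⁻ x, ∫⁻ y, f x y ∂μ ∂μ + ∫⁻ x, ∫⁻ y, f y x ∂μ ∂μ :=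
        lintegral_add_left hf.lintegral_prod_right' _
    _ = 2 * ∫⁻ x, ∫⁻ y, f x y ∂μ ∂μ := by rw [hswap, two_mul]

theorem lintegral_lintegral_le_of_add_swap_le [SFinite μ] {f g : α → α → ℝ≥0∞}
    (hf : Measurable (uncurry f)) (hg : Measurable (uncurry g))
    (h : ∀ x y, f x y + f y x ≤ g x y + g y x) :
    ∫⁻ x, ∫⁻ y, f x y ∂μ ∂μ ≤ ∫⁻ x, ∫⁻ y, g x y ∂μ ∂μ := by
  have h2 : ∫⁻ x, ∫⁻ y, (f x y + f y x) ∂μ ∂μ ≤ ∫⁻ x, ∫⁻ y, (g x y + g y x) ∂μ ∂μ :=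
    lintegral_mono fun x => lintegral_mono fun y => h x y
  rw [lintegral_lintegral_add_swap hf, lintegral_lintegral_add_swap hg] at h2
  exact (ENNReal.mul_le_mul_iff_right two_ne_zero ofNat_ne_top).1 h2

end MeasureTheory

section DPO

variable {X : Type*} [MeasurableSpace X]

noncomputable def dpoLoss (μ : Measure X) (pc pu r : X → ℝ) : ℝ≥0∞ :=
  ∫⁻ x, ∫⁻ y, ENNReal.ofReal (pc x * pu y * -log (Real.sigmoid (r x - r y))) ∂μ ∂μ

theorem measurable_dpoLoss_integrand {pc pu r : X → ℝ} (hpc : Measurable pc)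
    (hpu : Measurable pu) (hr : Measurable r) :
    Measurable (uncurry fun x y =>
      ENNReal.ofReal (pc x * pu y * -log (Real.sigmoid (r x - r y)))) := by
  have hσ := continuous_sigmoid.measurable
  fun_prop

theorem dpoLoss_log_div_add_const_le (μ : Measure X) [SFinite μ] {pc pu : X → ℝ}
    (hpcm : Measurable pc) (hpum : Measurable pu) (hpc : ∀ x, 0 < pc x) (hpu : ∀ x, 0 < pu x)
    (C : ℝ) {r : X → ℝ} (hr : Measurable r) :
    dpoLoss μ pc pu (fun x => log (pc x / pu x) + C) ≤ dpoLoss μ pc pu r := by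
  refine lintegral_lintegral_le_of_add_swap_le
    (measurable_dpoLoss_integrand hpcm hpum (by fun_prop))
    (measurable_dpoLoss_integrand hpcm hpum hr) fun x y => ?_
  have ha := mul_pos (hpc x) (hpu y)
  have hb := mul_pos (hpc y) (hpu x)
  have hw : log (pc x / pu x) + C - (log (pc y / pu y) + C) =
      log (pc x * pu y / (pc y * pu x)) := by
    rw [log_div ha.ne' hb.ne', log_mul (hpc x).ne' (hpu y).ne', log_mul (hpc y).ne' (hpu x).ne',
      log_div (hpc x).ne' (hpu x).ne', log_div (hpc y).ne' (hpu y).ne']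
    ring
  have hw' : log (pc y / pu y) + C - (log (pc x / pu x) + C) =
      -log (pc x * pu y / (pc y * pu x)) := by
    rw [← hw]; ring
  have hnonneg : ∀ {c : ℝ}, 0 < c → ∀ w, 0 ≤ c * -log (Real.sigmoid w) := fun hc w =>
    mul_nonneg hc.le (neg_nonneg.2 (log_nonpos (sigmoid_nonneg w) (sigmoid_le_one w)))
  dsimp only
  rw [hw, hw', ← neg_sub (r x), ← ofReal_add (hnonneg ha _) (hnonneg hb _),
    ← ofReal_add (hnonneg ha _) (hnonneg hb _)]
  exact ofReal_le_ofReal (binary_logistic_loss_le ha hb _)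

end DPO

/-- The integrands are nonpositive, so the inequality is stated for the Lebesgue integrals of
their negations, reversed. -/
theorem ccdpo_optimal_solution_general {X : Type*} [MeasurableSpace X]
    (μ : Measure X) [SigmaFinite μ]
    (pc pu pref : X → ℝ)
    (hpcm : Measurable pc) (hpum : Measurable pu) (hprefm : Measurable pref)
    (hpcpos : ∀ x, 0 < pc x) (hpupos : ∀ x, 0 < pu x) (hprefpos : ∀ x, 0 < pref x)
    (β : ℝ) (hβ : 0 < β)
    (hZint : Integrable (fun x => pref x * (pc x / pu x) ^ (1 / β)) μ)
    (Zt : ℝ) (hZt : Zt = ∫ x, pref x * (pc x / pu x) ^ (1 / β) ∂μ)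
    (pstar : X → ℝ)
    (hpstar : ∀ x, pstar x = pref x * (pc x / pu x) ^ (1 / β) / Zt)
    (q : X → ℝ) (hqm : Measurable q) :
    ∫⁻ x, ∫⁻ y, ENNReal.ofReal (pc x * pu y *
        (-(Real.log (_root_.sigmoid (β * Real.log (pstar x / pref x)
            - β * Real.log (pstar y / pref y)))))) ∂μ ∂μ ≤
      ∫⁻ x, ∫⁻ y, ENNReal.ofReal (pc x * pu y *
        (-(Real.log (_root_.sigmoid (β * Real.log (q x / pref x)
            - β * Real.log (q y / pref y)))))) ∂μ ∂μ := by
  rcases eq_zero_or_neZero μ with rfl | _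
  · simp
  have hratio : ∀ x, 0 < (pc x / pu x) ^ (1 / β) :=
    fun x => rpow_pos_of_pos (div_pos (hpcpos x) (hpupos x)) _
  have hZpos : 0 < Zt :=
    hZt ▸ integral_pos_of_pos hZint fun x => mul_pos (hprefpos x) (hratio x)
  have hreward : (fun x => β * log (pstar x / pref x)) =
      fun x => log (pc x / pu x) + -(β * log Zt) := by
    funext x
    rw [hpstar, mul_div_assoc, mul_div_cancel_left₀ _ (hprefpos x).ne',
      log_div (hratio x).ne' hZpos.ne', log_rpow (div_pos (hpcpos x) (hpupos x))]
    field_simp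
    ring
  rw [sigmoid_eq_real_sigmoid]
  change dpoLoss μ pc pu (fun x => β * log (pstar x / pref x)) ≤
    dpoLoss μ pc pu (fun x => β * log (q x / pref x))
  rw [hreward]
  exact dpoLoss_log_div_add_const_le μ hpcm hpum hpcpos hpupos _ (by fun_prop)

/-- **Paper's Theorem 2 (optimal solution of CC-DPO).**  With strictly positive
densities `p_c` (conditional), `p_u` (unconditional) and base model `p_ref`, `β > 0`,
and finite `Z̃ = ∫ p_ref (p_c/p_u)^{1/β} dμ`, the DPO objective with reward
parameterization `r_q(x) = β log (q x / p_ref x)`,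
`∬ log σ(r_q(x) − r_q(y)) p_c(x) p_u(y) dμ dμ` (valued in `[-∞, 0]`), is maximized over
probability densities `q` by the gamma-powered distribution
`p*(x) = p_ref(x) (p_c(x)/p_u(x))^{1/β} / Z̃`.  Since the integrands are nonpositive,
the inequality is stated via Lebesgue integrals of their negations, reversed. -/
theorem ccdpo_optimal_solution {X : Type*} [MeasurableSpace X]
    (μ : Measure X) [SigmaFinite μ]
    (pc pu pref : X → ℝ)
    (hpcm : Measurable pc) (hpum : Measurable pu) (hprefm : Measurable pref)
    (hpcpos : ∀ x, 0 < pc x) (hpupos : ∀ x, 0 < pu x) (hprefpos : ∀ x, 0 < pref x)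
    (hpci : Integrable pc μ) (hpui : Integrable pu μ) (hprefi : Integrable pref μ)
    (hpc1 : ∫ x, pc x ∂μ = 1) (hpu1 : ∫ x, pu x ∂μ = 1) (hpref1 : ∫ x, pref x ∂μ = 1)
    (β : ℝ) (hβ : 0 < β)
    (hZint : Integrable (fun x => pref x * (pc x / pu x) ^ (1 / β)) μ)
    (Zt : ℝ) (hZt : Zt = ∫ x, pref x * (pc x / pu x) ^ (1 / β) ∂μ)
    (pstar : X → ℝ)
    (hpstar : ∀ x, pstar x = pref x * (pc x / pu x) ^ (1 / β) / Zt)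
    (q : X → ℝ) (hqm : Measurable q) (hqpos : ∀ x, 0 < q x)
    (hqi : Integrable q μ) (hq1 : ∫ x, q x ∂μ = 1) :
    ∫⁻ x, ∫⁻ y, ENNReal.ofReal (pc x * pu y *
        (-(Real.log (_root_.sigmoid (β * Real.log (pstar x / pref x)
            - β * Real.log (pstar y / pref y)))))) ∂μ ∂μ ≤
      ∫⁻ x, ∫⁻ y, ENNReal.ofReal (pc x * pu y *
        (-(Real.log (_root_.sigmoid (β * Real.log (q x / pref x)
            - β * Real.log (q y / pref y)))))) ∂μ ∂μ :=
  ccdpo_optimal_solution_general μ pc pu pref hpcm hpum hprefm hpcpos hpupos hprefpos β hβ hZint Zt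
    hZt pstar hpstar q hqm
end

section
/- Let p⁺ and p⁻ be probability densities on ℝ^d (with respect to Lebesgue measure), let k : ℝ^d × ℝ^d → ℝ be a measurable positive transition kernel with y ↦ k(y,x) differentiable, and define the noisy marginals q⁺(y) = ∫ p⁺(x) k(y, x) dx and q⁻(y) = ∫ p⁻(x) k(y, x) dx, assumed strictly positive. Let g(y, x) = ∇_y log k(y, x), and assume that for a.e. y the score identities ∇ log q⁺(y) = ∫ (p⁺(x)k(y,x)/q⁺(y)) g(y,x) dx and ∇ log q⁻(y) = ∫ (p⁻(x)k(y,x)/q⁻(y)) g(y,x) dx hold, with ∫∫ ‖g(y,x)‖² p⁺(x)k(y,x) dx dy < ∞ and ∫∫ (q⁺(y)/q⁻(y))‖g(y,x)‖² p⁻(x)k(y,x) dx dy < ∞. Let η ≥ 0 and define, for measurable s : ℝ^d → ℝ^d with ∫ q⁺(y)‖s(y)‖² dy < ∞, J(s) = (1+η)∫∫ ‖g(y,x) − s(y)‖² p⁺(x) k(y,x) dx dy − η ∫∫ (q⁺(y)/q⁻(y)) ‖g(y,x) − s(y)‖² p⁻(x) k(y,x) dx dy, and define s*(y) = (1+η)∇log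 q⁺(y) − η∇log q⁻(y). Then J(s) − J(s*) = ∫ q⁺(y)‖s(y) − s*(y)‖² dy ≥ 0; in particular the generalized CFG-style score s* is the unique (up to q⁺-null sets) minimizer of J. -/
/-!
For fixed `y`, the weights `x ↦ p⁺ x * k y x` and `x ↦ (q⁺ y / q⁻ y) * p⁻ x * k y x` both have
mass `q⁺ y`, and by the score identities `g y` has mean `∇ log q⁺ y`, resp. `∇ log q⁻ y`, under
them. Expanding the square, `∫ w ‖g - v‖² = ∫ w ‖g‖² - 2 q⁺ ⟪v, mean⟫ + q⁺ ‖v‖²`, so the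
combination with coefficients `1 + η` and `-η` equals, up to a term independent of `s`,
`∫ q⁺ (‖s‖² - 2 ⟪s, s*⟫) = ∫ q⁺ ‖s - s*‖² - ∫ q⁺ ‖s*‖²`. Jensen's inequality
`q⁺ ‖mean‖² ≤ ∫ w ‖g‖²` makes all the terms integrable.
-/

open MeasureTheory Filter
open scoped RealInnerProductSpace

section ParametricGradient

variable {E X : Type*} [NormedAddCommGroup E] [InnerProductSpace ℝ E] [MeasurableSpace X]
  {f : E → X → ℝ} {y : E}

lemma measurable_fderiv_apply_in_param (hf : ∀ x, DifferentiableAt ℝ (fun y' => f y' x) y)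
    (hfm : ∀ y', Measurable (f y')) (v : E) :
    Measurable fun x => fderiv ℝ (fun y' => f y' x) y v :=
  measurable_of_tendsto_metrizable
    (f := fun (n : ℕ) x => (n : ℝ) • (f (y + (n : ℝ)⁻¹ • v) x - f y x))
    (fun n => (((hfm _).sub (hfm y)).const_smul (n : ℝ) :))
    (tendsto_pi_nhds.2 fun x => (hf x).hasFDerivAt.lim v
      (by simpa using tendsto_natCast_atTop_atTop))

lemma measurable_gradient_in_param [FiniteDimensional ℝ E] [MeasurableSpace E] [BorelSpace E]
    (hf : ∀ x, DifferentiableAt ℝ (fun y' => f y' x) y) (hfm : ∀ y', Measurable (f y')) :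
    Measurable fun x => gradient (fun y' => f y' x) y := by
  let b := stdOrthonormalBasis ℝ E
  have hexp : (fun x => gradient (fun y' => f y' x) y)
      = fun x => ∑ i, fderiv ℝ (fun y' => f y' x) y (b i) • b i := by
    funext x
    conv_lhs => rw [← b.sum_repr' (gradient (fun y' => f y' x) y)]
    simp [inner_gradient_right]
  rw [hexp]
  exact Finset.measurable_sum _ fun i _ =>
    (measurable_fderiv_apply_in_param hf hfm (b i)).smul_const _

end ParametricGradient

lemma measurable_gradient {E : Type*} [NormedAddCommGroup E] [InnerProductSpace ℝ E]
    [CompleteSpace E] [MeasurableSpace E] [BorelSpace E] (f : E → ℝ) :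
    Measurable (gradient f) :=
  (InnerProductSpace.toDual ℝ E).symm.continuous.measurable.comp (measurable_fderiv ℝ f)

section WeightedSecondMoment

variable {α F : Type*} [MeasurableSpace α] {μ : Measure α}
  [NormedAddCommGroup F] [InnerProductSpace ℝ F]
  {w : α → ℝ} {G : α → F}

lemma integrable_smul_of_integrable_mul_norm_sq (hw0 : ∀ x, 0 ≤ w x) (hwi : Integrable w μ)
    (hG : AEStronglyMeasurable G μ) (hwG2 : Integrable (fun x => w x * ‖G x‖ ^ 2) μ) :
    Integrable (fun x => w x • G x) μ := by
  refine (hwi.add hwG2).mono' (hwi.aestronglyMeasurable.smul hG) (Eventually.of_forall fun x => ?_)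
  rw [norm_smul, Real.norm_of_nonneg (hw0 x), Pi.add_apply]
  nlinarith [mul_nonneg (hw0 x) (sq_nonneg (‖G x‖ - 1)), mul_nonneg (hw0 x) (norm_nonneg (G x))]

lemma integral_smul_eq_smul_of_eq_integral_div_smul {q : ℝ} {c : F} (hq : q ≠ 0)
    (hc : c = ∫ x, (w x / q) • G x ∂μ) :
    ∫ x, w x • G x ∂μ = q • c := by
  simp_rw [hc, div_eq_inv_mul, mul_smul, integral_smul, smul_inv_smul₀ hq]

lemma integral_mul_smul (r : ℝ) :
    ∫ x, (r * w x) • G x ∂μ = r • ∫ x, w x • G x ∂μ := by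
  simp_rw [mul_smul, integral_smul]

variable [CompleteSpace F] {m : ℝ} {c : F}

lemma integral_mul_norm_sub_sq_of_moments (hw0 : ∀ x, 0 ≤ w x) (hwi : Integrable w μ)
    (hG : AEStronglyMeasurable G μ) (hwG2 : Integrable (fun x => w x * ‖G x‖ ^ 2) μ)
    (hm : ∫ x, w x ∂μ = m) (hc : ∫ x, w x • G x ∂μ = m • c) (v : F) :
    ∫ x, w x * ‖G x - v‖ ^ 2 ∂μ = (∫ x, w x * ‖G x‖ ^ 2 ∂μ) - 2 * (m * ⟪v, c⟫) + m * ‖v‖ ^ 2 := by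
  have hwG := integrable_smul_of_integrable_mul_norm_sq hw0 hwi hG hwG2
  have hcross : Integrable (fun x => 2 * ⟪v, w x • G x⟫) μ := (hwG.const_inner v).const_mul 2
  calc ∫ x, w x * ‖G x - v‖ ^ 2 ∂μ
      = ∫ x, (w x * ‖G x‖ ^ 2 - 2 * ⟪v, w x • G x⟫ + w x * ‖v‖ ^ 2) ∂μ := by
        congr with x
        rw [norm_sub_sq_real, real_inner_smul_right, real_inner_comm]
        ring
    _ = _ := by
        rw [integral_add (f := fun x => w x * ‖G x‖ ^ 2 - 2 * ⟪v, w x • G x⟫)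
            (hwG2.sub hcross) (hwi.mul_const _), integral_sub hwG2 hcross, integral_const_mul,
          integral_inner hwG, integral_mul_const, hc, hm, real_inner_smul_right]

lemma mul_norm_sq_le_integral_mul_norm_sq_of_moments (hw0 : ∀ x, 0 ≤ w x)
    (hwi : Integrable w μ) (hG : AEStronglyMeasurable G μ)
    (hwG2 : Integrable (fun x => w x * ‖G x‖ ^ 2) μ)
    (hm : ∫ x, w x ∂μ = m) (hc : ∫ x, w x • G x ∂μ = m • c) :
    m * ‖c‖ ^ 2 ≤ ∫ x, w x * ‖G x‖ ^ 2 ∂μ := by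
  have hvar : 0 ≤ ∫ x, w x * ‖G x - c‖ ^ 2 ∂μ :=
    integral_nonneg fun x => mul_nonneg (hw0 x) (sq_nonneg _)
  rw [integral_mul_norm_sub_sq_of_moments hw0 hwi hG hwG2 hm hc c,
    real_inner_self_eq_norm_sq] at hvar
  linarith

end WeightedSecondMoment

section WeightedNorm

variable {Y F : Type*} [MeasurableSpace Y] {μ : Measure Y} [NormedAddCommGroup F] {q : Y → ℝ}

lemma integrable_mul_norm_sub_sq {a b : Y → F} (hq : AEStronglyMeasurable q μ)
    (ha : AEStronglyMeasurable a μ) (hb : AEStronglyMeasurable b μ)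
    (ha2 : Integrable (fun y => q y * ‖a y‖ ^ 2) μ) (hb2 : Integrable (fun y => q y * ‖b y‖ ^ 2) μ) :
    Integrable (fun y => q y * ‖a y - b y‖ ^ 2) μ := by
  refine ((ha2.norm.add hb2.norm).const_mul 2).mono' (hq.mul ((ha.sub hb).norm.pow 2))
    (Eventually.of_forall fun y => ?_)
  have hsub : ‖a y - b y‖ ^ 2 ≤ 2 * ‖a y‖ ^ 2 + 2 * ‖b y‖ ^ 2 := by
    nlinarith [norm_sub_le (a y) (b y), norm_nonneg (a y - b y), sq_nonneg (‖a y‖ - ‖b y‖)]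
  simp only [Pi.add_apply, norm_mul, norm_pow, norm_norm]
  nlinarith [mul_le_mul_of_nonneg_left hsub (norm_nonneg (q y))]

lemma integrable_mul_norm_smul_sq [NormedSpace ℝ F] {a : Y → F} (c : ℝ)
    (ha2 : Integrable (fun y => q y * ‖a y‖ ^ 2) μ) :
    Integrable (fun y => q y * ‖c • a y‖ ^ 2) μ :=
  (ha2.const_mul (c ^ 2)).congr (Eventually.of_forall fun y => by
    simp only [norm_smul, Real.norm_eq_abs, mul_pow, sq_abs]
    ring)

lemma ae_eq_withDensity_of_integral_mul_norm_sub_sq_eq_zero {a b : Y → F}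
    (hq : Measurable q) (hq0 : ∀ y, 0 ≤ q y)
    (hint : Integrable (fun y => q y * ‖a y - b y‖ ^ 2) μ)
    (h : ∫ y, q y * ‖a y - b y‖ ^ 2 ∂μ = 0) :
    a =ᵐ[μ.withDensity fun y => ENNReal.ofReal (q y)] b := by
  have hzero := (integral_eq_zero_iff_of_nonneg
    (fun y => mul_nonneg (hq0 y) (sq_nonneg _)) hint).1 h
  rw [EventuallyEq, ae_withDensity_iff hq.ennreal_ofReal]
  filter_upwards [hzero] with y hy hqy
  have hqy : q y ≠ 0 := (ENNReal.ofReal_pos.1 (pos_iff_ne_zero.2 hqy)).ne'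
  simpa [hqy, sub_eq_zero] using hy

end WeightedNorm

section QuadraticRisk

variable {Y F : Type*} [NormedAddCommGroup F] [InnerProductSpace ℝ F] {q : Y → ℝ} {Gp Gm : Y → F}

/-- The expansion of `y ↦ ∫ w y x * ‖g y x - t y‖² dx` for a weight `w y` of mass `q y`, first
moment `q y • G y` and second moment `E y`. -/
def quadraticRisk (q E : Y → ℝ) (G t : Y → F) (y : Y) : ℝ :=
  E y - 2 * (q y * ⟪t y, G y⟫) + q y * ‖t y‖ ^ 2

def guidedScore (η : ℝ) (Gp Gm : Y → F) (y : Y) : F :=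
  (1 + η) • Gp y - η • Gm y

lemma guided_quadraticRisk_eq (η : ℝ) (Ep Em : Y → ℝ) (t : Y → F) (y : Y) :
    (1 + η) * quadraticRisk q Ep Gp t y - η * quadraticRisk q Em Gm t y
      = ((1 + η) * Ep y - η * Em y - q y * ‖guidedScore η Gp Gm y‖ ^ 2)
        + q y * ‖t y - guidedScore η Gp Gm y‖ ^ 2 := by
  simp only [quadraticRisk, guidedScore, norm_sub_sq_real (t y), inner_sub_right,
    real_inner_smul_right]
  ring

variable [MeasurableSpace Y] {μ : Measure Y}

lemma integrable_mul_inner {a b : Y → F} (hq : AEStronglyMeasurable q μ)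
    (ha : AEStronglyMeasurable a μ) (hb : AEStronglyMeasurable b μ)
    (ha2 : Integrable (fun y => q y * ‖a y‖ ^ 2) μ) (hb2 : Integrable (fun y => q y * ‖b y‖ ^ 2) μ) :
    Integrable (fun y => q y * ⟪a y, b y⟫) μ := by
  refine (((ha2.add hb2).sub (integrable_mul_norm_sub_sq hq ha hb ha2 hb2)).div_const 2).congr
    (Eventually.of_forall fun y => ?_)
  simp only [Pi.add_apply, Pi.sub_apply, norm_sub_sq_real]
  ring

lemma aestronglyMeasurable_guidedScore (η : ℝ) (hGp : AEStronglyMeasurable Gp μ)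
    (hGm : AEStronglyMeasurable Gm μ) : AEStronglyMeasurable (guidedScore η Gp Gm) μ :=
  (hGp.const_smul _).sub (hGm.const_smul _)

lemma integrable_mul_norm_guidedScore_sq (η : ℝ) (hq : AEStronglyMeasurable q μ)
    (hGp : AEStronglyMeasurable Gp μ) (hGm : AEStronglyMeasurable Gm μ)
    (hGp2 : Integrable (fun y => q y * ‖Gp y‖ ^ 2) μ)
    (hGm2 : Integrable (fun y => q y * ‖Gm y‖ ^ 2) μ) :
    Integrable (fun y => q y * ‖guidedScore η Gp Gm y‖ ^ 2) μ :=
  integrable_mul_norm_sub_sq hq (hGp.const_smul _) (hGm.const_smul _)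
    (integrable_mul_norm_smul_sq _ hGp2) (integrable_mul_norm_smul_sq _ hGm2)

lemma integrable_quadraticRisk {E : Y → ℝ} {G t : Y → F} (hE : Integrable E μ)
    (hq : AEStronglyMeasurable q μ) (hG : AEStronglyMeasurable G μ)
    (ht : AEStronglyMeasurable t μ) (hG2 : Integrable (fun y => q y * ‖G y‖ ^ 2) μ)
    (ht2 : Integrable (fun y => q y * ‖t y‖ ^ 2) μ) :
    Integrable (quadraticRisk q E G t) μ :=
  (hE.sub ((integrable_mul_inner hq ht hG ht2 hG2).const_mul 2)).add ht2

lemma integral_guided_quadraticRisk_eq (η : ℝ) {Ep Em : Y → ℝ} {t : Y → F}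
    (hq : AEStronglyMeasurable q μ) (hGp : AEStronglyMeasurable Gp μ)
    (hGm : AEStronglyMeasurable Gm μ) (hEp : Integrable Ep μ) (hEm : Integrable Em μ)
    (hGp2 : Integrable (fun y => q y * ‖Gp y‖ ^ 2) μ)
    (hGm2 : Integrable (fun y => q y * ‖Gm y‖ ^ 2) μ)
    (ht : AEStronglyMeasurable t μ) (ht2 : Integrable (fun y => q y * ‖t y‖ ^ 2) μ) :
    (1 + η) * ∫ y, quadraticRisk q Ep Gp t y ∂μ - η * ∫ y, quadraticRisk q Em Gm t y ∂μ
      = (∫ y, ((1 + η) * Ep y - η * Em y - q y * ‖guidedScore η Gp Gm y‖ ^ 2) ∂μ)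
        + ∫ y, q y * ‖t y - guidedScore η Gp Gm y‖ ^ 2 ∂μ := by
  have hS := aestronglyMeasurable_guidedScore η hGp hGm
  have hS2 := integrable_mul_norm_guidedScore_sq η hq hGp hGm hGp2 hGm2
  calc _ = ∫ y, ((1 + η) * quadraticRisk q Ep Gp t y - η * quadraticRisk q Em Gm t y) ∂μ := by
        rw [integral_sub ((integrable_quadraticRisk hEp hq hGp ht hGp2 ht2).const_mul _)
          ((integrable_quadraticRisk hEm hq hGm ht hGm2 ht2).const_mul _),
          integral_const_mul, integral_const_mul]
    _ = _ := by
        simp_rw [guided_quadraticRisk_eq]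
        exact integral_add (((hEp.const_mul _).sub (hEm.const_mul _)).sub hS2)
          (integrable_mul_norm_sub_sq hq ht hS ht2 hS2)

end QuadraticRisk

section Disintegration

variable {Y X F : Type*} [MeasurableSpace Y] [MeasurableSpace X] {μ : Measure Y} {ν : Measure X}
  [NormedAddCommGroup F] [InnerProductSpace ℝ F]
  {W : Y → X → ℝ} {g : Y → X → F} {m : Y → ℝ} {G : Y → F}

lemma measurable_integral_mul [SFinite ν] {p : X → ℝ} {k : Y → X → ℝ} (hp : Measurable p)
    (hk : Measurable fun z : Y × X => k z.1 z.2) :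
    Measurable fun y => ∫ x, p x * k y x ∂ν :=
  ((hp.comp measurable_snd).mul hk).stronglyMeasurable.integral_prod_right'.measurable

variable (μ ν) in
def HasMassAndMean (W : Y → X → ℝ) (g : Y → X → F) (m : Y → ℝ) (G : Y → F) : Prop :=
  ∀ᵐ y ∂μ, Integrable (W y) ν ∧ ∫ x, W y x ∂ν = m y ∧ ∫ x, W y x • g y x ∂ν = m y • G y

lemma hasMassAndMean_of_score (hm : ∀ y, ∫ x, W y x ∂ν = m y) (hm0 : ∀ y, m y ≠ 0)
    (hG : ∀ᵐ y ∂μ, G y = ∫ x, (W y x / m y) • g y x ∂ν) :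
    HasMassAndMean μ ν W g m G :=
  hG.mono fun y hy => ⟨.of_integral_ne_zero (hm y ▸ hm0 y), hm y,
    integral_smul_eq_smul_of_eq_integral_div_smul (hm0 y) hy⟩

lemma HasMassAndMean.reweight (h : HasMassAndMean μ ν W g m G) (r : Y → ℝ) (hm0 : ∀ y, m y ≠ 0) :
    HasMassAndMean μ ν (fun y x => r y / m y * W y x) g r G :=
  h.mono fun y ⟨hWi, hm, hG⟩ => ⟨hWi.const_mul _,
    by rw [integral_const_mul, hm, div_mul_cancel₀ _ (hm0 y)],
    by rw [integral_mul_smul, hG, smul_smul, div_mul_cancel₀ _ (hm0 y)]⟩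

variable [SFinite μ] [SFinite ν] [CompleteSpace F]

lemma HasMassAndMean.ae_integral_mul_norm_sub_sq_eq (h : HasMassAndMean μ ν W g m G)
    (hW0 : ∀ y x, 0 ≤ W y x) (hg : ∀ y, AEStronglyMeasurable (g y) ν)
    (hWg2 : Integrable (fun z : Y × X => W z.1 z.2 * ‖g z.1 z.2‖ ^ 2) (μ.prod ν)) :
    ∀ᵐ y ∂μ, ∀ t : Y → F, ∫ x, W y x * ‖g y x - t y‖ ^ 2 ∂ν
      = quadraticRisk m (fun y => ∫ x, W y x * ‖g y x‖ ^ 2 ∂ν) G t y := by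
  filter_upwards [h, hWg2.prod_right_ae] with y ⟨hWi, hm, hG⟩ hWg2 t
  exact integral_mul_norm_sub_sq_of_moments (hW0 y) hWi (hg y) hWg2 hm hG (t y)

lemma HasMassAndMean.integrable_mul_norm_sq (h : HasMassAndMean μ ν W g m G)
    (hW0 : ∀ y x, 0 ≤ W y x) (hg : ∀ y, AEStronglyMeasurable (g y) ν)
    (hWg2 : Integrable (fun z : Y × X => W z.1 z.2 * ‖g z.1 z.2‖ ^ 2) (μ.prod ν))
    (hmm : AEStronglyMeasurable m μ) (hGm : AEStronglyMeasurable G μ) :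
    Integrable (fun y => m y * ‖G y‖ ^ 2) μ := by
  refine hWg2.integral_prod_left.mono' (hmm.mul (hGm.norm.pow 2)) ?_
  filter_upwards [h, hWg2.prod_right_ae] with y ⟨hWi, hm, hG⟩ hWg2
  have hm0 : 0 ≤ m y := hm ▸ integral_nonneg (hW0 y)
  rw [Real.norm_of_nonneg (by positivity)]
  exact mul_norm_sq_le_integral_mul_norm_sq_of_moments (hW0 y) hWi (hg y) hWg2 hm hG

lemma contrastive_objective_eq (η : ℝ) {Wp Wm : Y → X → ℝ} {Gp Gm t : Y → F}
    (hp : HasMassAndMean μ ν Wp g m Gp) (hm : HasMassAndMean μ ν Wm g m Gm)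
    (hWp0 : ∀ y x, 0 ≤ Wp y x) (hWm0 : ∀ y x, 0 ≤ Wm y x) (hg : ∀ y, AEStronglyMeasurable (g y) ν)
    (hWpg2 : Integrable (fun z : Y × X => Wp z.1 z.2 * ‖g z.1 z.2‖ ^ 2) (μ.prod ν))
    (hWmg2 : Integrable (fun z : Y × X => Wm z.1 z.2 * ‖g z.1 z.2‖ ^ 2) (μ.prod ν))
    (hmm : AEStronglyMeasurable m μ) (hGp : AEStronglyMeasurable Gp μ)
    (hGm : AEStronglyMeasurable Gm μ) (ht : AEStronglyMeasurable t μ)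
    (ht2 : Integrable (fun y => m y * ‖t y‖ ^ 2) μ) :
    (1 + η) * (∫ y, ∫ x, Wp y x * ‖g y x - t y‖ ^ 2 ∂ν ∂μ)
        - η * ∫ y, ∫ x, Wm y x * ‖g y x - t y‖ ^ 2 ∂ν ∂μ
      = (∫ y, ((1 + η) * (∫ x, Wp y x * ‖g y x‖ ^ 2 ∂ν) - η * (∫ x, Wm y x * ‖g y x‖ ^ 2 ∂ν)
          - m y * ‖guidedScore η Gp Gm y‖ ^ 2) ∂μ)
        + ∫ y, m y * ‖t y - guidedScore η Gp Gm y‖ ^ 2 ∂μ := by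
  rw [integral_congr_ae ((hp.ae_integral_mul_norm_sub_sq_eq hWp0 hg hWpg2).mono fun y hy => hy t),
    integral_congr_ae ((hm.ae_integral_mul_norm_sub_sq_eq hWm0 hg hWmg2).mono fun y hy => hy t)]
  exact integral_guided_quadraticRisk_eq η hmm hGp hGm hWpg2.integral_prod_left
    hWmg2.integral_prod_left (hp.integrable_mul_norm_sq hWp0 hg hWpg2 hmm hGp)
    (hm.integrable_mul_norm_sq hWm0 hg hWmg2 hmm hGm) ht ht2

end Disintegration

theorem cfg_variant_equals_weighted_mclr_general {d : ℕ}
    (pplus pminus : EuclideanSpace ℝ (Fin d) → ℝ)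
    (hppm : Measurable pplus)
    (hpp0 : ∀ x, 0 ≤ pplus x) (hpm0 : ∀ x, 0 ≤ pminus x)
    (k : EuclideanSpace ℝ (Fin d) → EuclideanSpace ℝ (Fin d) → ℝ)
    (hkm : Measurable (fun z : EuclideanSpace ℝ (Fin d) × EuclideanSpace ℝ (Fin d) => k z.1 z.2))
    (hkpos : ∀ y x, 0 < k y x)
    (hkdiff : ∀ x, Differentiable ℝ (fun y => k y x))
    (qplus qminus : EuclideanSpace ℝ (Fin d) → ℝ)
    (hqplus : ∀ y, qplus y = ∫ x, pplus x * k y x) (hqminus : ∀ y, qminus y = ∫ x, pminus x * k y x)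
    (hqppos : ∀ y, 0 < qplus y) (hqmpos : ∀ y, 0 < qminus y)
    (g : EuclideanSpace ℝ (Fin d) → EuclideanSpace ℝ (Fin d) → EuclideanSpace ℝ (Fin d))
    (hg : ∀ y x, g y x = gradient (fun y' => Real.log (k y' x)) y)
    (hscore_p : ∀ᵐ y ∂volume, gradient (fun y' => Real.log (qplus y')) y
      = ∫ x, (pplus x * k y x / qplus y) • g y x)
    (hscore_m : ∀ᵐ y ∂volume, gradient (fun y' => Real.log (qminus y')) y
      = ∫ x, (pminus x * k y x / qminus y) • g y x)
    (hg_sq_p : Integrable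
      (fun z : EuclideanSpace ℝ (Fin d) × EuclideanSpace ℝ (Fin d) =>
        pplus z.2 * k z.1 z.2 * ‖g z.1 z.2‖ ^ 2) (volume.prod volume))
    (hg_sq_m : Integrable
      (fun z : EuclideanSpace ℝ (Fin d) × EuclideanSpace ℝ (Fin d) =>
        (qplus z.1 / qminus z.1) * (pminus z.2 * k z.1 z.2) * ‖g z.1 z.2‖ ^ 2) (volume.prod volume))
    (η : ℝ)
    (J : (EuclideanSpace ℝ (Fin d) → EuclideanSpace ℝ (Fin d)) → ℝ)
    (hJ : ∀ t, J t
      = (1 + η) * (∫ y, ∫ x, pplus x * k y x * ‖g y x - t y‖ ^ 2)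
        - η * ∫ y, ∫ x, (qplus y / qminus y) * (pminus x * k y x) * ‖g y x - t y‖ ^ 2)
    (sstar : EuclideanSpace ℝ (Fin d) → EuclideanSpace ℝ (Fin d))
    (hsstar : ∀ y, sstar y
      = (1 + η) • gradient (fun y' => Real.log (qplus y')) y
        - η • gradient (fun y' => Real.log (qminus y')) y)
    (s : EuclideanSpace ℝ (Fin d) → EuclideanSpace ℝ (Fin d))
    (hsm : Measurable s)
    (hs_sq : Integrable (fun y => qplus y * ‖s y‖ ^ 2)) :
    (J s - J sstar = ∫ y, qplus y * ‖s y - sstar y‖ ^ 2) ∧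
      (0 ≤ ∫ y, qplus y * ‖s y - sstar y‖ ^ 2) ∧
      (J s = J sstar → s =ᵐ[volume.withDensity fun y => ENNReal.ofReal (qplus y)] sstar) := by
  set Gp := gradient fun y' => Real.log (qplus y')
  set Gm := gradient fun y' => Real.log (qminus y')
  obtain rfl : sstar = guidedScore η Gp Gm := funext hsstar
  have hg_meas : ∀ y, AEStronglyMeasurable (g y) := fun y => by
    rw [funext (hg y)]
    exact (measurable_gradient_in_param (fun x => (hkdiff x y).log (hkpos y x).ne')
      fun y' => (hkm.comp measurable_prodMk_left).log).aestronglyMeasurable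
  have hqp : Measurable qplus := funext hqplus ▸ measurable_integral_mul hppm hkm
  have hWp0 : ∀ y x, 0 ≤ pplus x * k y x := fun y x => mul_nonneg (hpp0 x) (hkpos y x).le
  have hWm0 : ∀ y x, 0 ≤ qplus y / qminus y * (pminus x * k y x) := fun y x =>
    mul_nonneg (div_nonneg (hqppos y).le (hqmpos y).le) (mul_nonneg (hpm0 x) (hkpos y x).le)
  have hp := hasMassAndMean_of_score (fun y => (hqplus y).symm) (fun y => (hqppos y).ne') hscore_p
  have hm := (hasMassAndMean_of_score (fun y => (hqminus y).symm) (fun y => (hqmpos y).ne')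
    hscore_m).reweight qplus fun y => (hqmpos y).ne'
  have hGp : AEStronglyMeasurable Gp := (measurable_gradient _).aestronglyMeasurable
  have hGm : AEStronglyMeasurable Gm := (measurable_gradient _).aestronglyMeasurable
  obtain ⟨C, hJ_eq⟩ : ∃ C, ∀ t, AEStronglyMeasurable t →
      Integrable (fun y => qplus y * ‖t y‖ ^ 2) →
      J t = C + ∫ y, qplus y * ‖t y - guidedScore η Gp Gm y‖ ^ 2 := ⟨_, fun t ht ht2 =>
    (hJ t).trans (contrastive_objective_eq η hp hm hWp0 hWm0 hg_meas hg_sq_p hg_sq_m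
      hqp.aestronglyMeasurable hGp hGm ht ht2)⟩
  have hS2 := integrable_mul_norm_guidedScore_sq η hqp.aestronglyMeasurable hGp hGm
    (hp.integrable_mul_norm_sq hWp0 hg_meas hg_sq_p hqp.aestronglyMeasurable hGp)
    (hm.integrable_mul_norm_sq hWm0 hg_meas hg_sq_m hqp.aestronglyMeasurable hGm)
  have hS := aestronglyMeasurable_guidedScore η hGp hGm
  have hmain : J s - J (guidedScore η Gp Gm)
      = ∫ y, qplus y * ‖s y - guidedScore η Gp Gm y‖ ^ 2 := by
    rw [hJ_eq s hsm.aestronglyMeasurable hs_sq, hJ_eq _ hS hS2]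
    simp
  refine ⟨hmain, integral_nonneg fun y => mul_nonneg (hqppos y).le (sq_nonneg _), fun hJs => ?_⟩
  refine ae_eq_withDensity_of_integral_mul_norm_sub_sq_eq_zero hqp (fun y => (hqppos y).le)
    (integrable_mul_norm_sub_sq hqp.aestronglyMeasurable hsm.aestronglyMeasurable hS hs_sq hS2) ?_
  rw [← hmain, hJs, sub_self]

/-- **Paper's Corollary 3 (CFG variants under the alignment framework), at a fixed
time.**  For any two data densities `p⁺` and `p⁻` (e.g. a strong and a weak model for
Autoguidance, or a reward-fine-tuned and a base model for inference-time alignment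
guidance), with positive transition kernel `k`, noisy marginals
`q⁺ y = ∫ p⁺ x · k y x dx` and `q⁻ y = ∫ p⁻ x · k y x dx` (strictly positive),
transition score `g y x = ∇_y log k y x`, the a.e. score identities and the stated
square-integrability conditions, the MCLR-style contrastive objective
`J s = (1+η) ∬ ‖g − s‖² p⁺ k − η ∬ (q⁺/q⁻) ‖g − s‖² p⁻ k`
satisfies `J s − J s* = ∫ q⁺ ‖s − s*‖² ≥ 0` for the generalized CFG-style score
`s* = (1+η) ∇log q⁺ − η ∇log q⁻`; in particular `s*` is the unique (up to `q⁺`-null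
sets) minimizer of `J`. -/
theorem cfg_variant_equals_weighted_mclr {d : ℕ}
    (pplus pminus : EuclideanSpace ℝ (Fin d) → ℝ)
    (hppm : Measurable pplus) (hpmm : Measurable pminus)
    (hpp0 : ∀ x, 0 ≤ pplus x) (hpm0 : ∀ x, 0 ≤ pminus x)
    (hppi : Integrable pplus) (hpmi : Integrable pminus)
    (hpp1 : ∫ x, pplus x = 1) (hpm1 : ∫ x, pminus x = 1)
    (k : EuclideanSpace ℝ (Fin d) → EuclideanSpace ℝ (Fin d) → ℝ)
    (hkm : Measurable (fun z : EuclideanSpace ℝ (Fin d) × EuclideanSpace ℝ (Fin d) => k z.1 z.2))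
    (hkpos : ∀ y x, 0 < k y x)
    (hkdiff : ∀ x, Differentiable ℝ (fun y => k y x))
    (qplus qminus : EuclideanSpace ℝ (Fin d) → ℝ)
    (hqplus : ∀ y, qplus y = ∫ x, pplus x * k y x) (hqminus : ∀ y, qminus y = ∫ x, pminus x * k y x)
    (hqppos : ∀ y, 0 < qplus y) (hqmpos : ∀ y, 0 < qminus y)
    (g : EuclideanSpace ℝ (Fin d) → EuclideanSpace ℝ (Fin d) → EuclideanSpace ℝ (Fin d))
    (hg : ∀ y x, g y x = gradient (fun y' => Real.log (k y' x)) y)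
    (hscore_p : ∀ᵐ y ∂volume, gradient (fun y' => Real.log (qplus y')) y
      = ∫ x, (pplus x * k y x / qplus y) • g y x)
    (hscore_m : ∀ᵐ y ∂volume, gradient (fun y' => Real.log (qminus y')) y
      = ∫ x, (pminus x * k y x / qminus y) • g y x)
    (hg_sq_p : Integrable
      (fun z : EuclideanSpace ℝ (Fin d) × EuclideanSpace ℝ (Fin d) =>
        pplus z.2 * k z.1 z.2 * ‖g z.1 z.2‖ ^ 2) (volume.prod volume))
    (hg_sq_m : Integrable
      (fun z : EuclideanSpace ℝ (Fin d) × EuclideanSpace ℝ (Fin d) =>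
        (qplus z.1 / qminus z.1) * (pminus z.2 * k z.1 z.2) * ‖g z.1 z.2‖ ^ 2) (volume.prod volume))
    (η : ℝ) (hη : 0 ≤ η)
    (J : (EuclideanSpace ℝ (Fin d) → EuclideanSpace ℝ (Fin d)) → ℝ)
    (hJ : ∀ t, J t
      = (1 + η) * (∫ y, ∫ x, pplus x * k y x * ‖g y x - t y‖ ^ 2)
        - η * ∫ y, ∫ x, (qplus y / qminus y) * (pminus x * k y x) * ‖g y x - t y‖ ^ 2)
    (sstar : EuclideanSpace ℝ (Fin d) → EuclideanSpace ℝ (Fin d))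
    (hsstar : ∀ y, sstar y
      = (1 + η) • gradient (fun y' => Real.log (qplus y')) y
        - η • gradient (fun y' => Real.log (qminus y')) y)
    (s : EuclideanSpace ℝ (Fin d) → EuclideanSpace ℝ (Fin d))
    (hsm : Measurable s)
    (hs_sq : Integrable (fun y => qplus y * ‖s y‖ ^ 2)) :
    (J s - J sstar = ∫ y, qplus y * ‖s y - sstar y‖ ^ 2) ∧
      (0 ≤ ∫ y, qplus y * ‖s y - sstar y‖ ^ 2) ∧
      (J s = J sstar → s =ᵐ[volume.withDensity fun y => ENNReal.ofReal (qplus y)] sstar) :=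
  cfg_variant_equals_weighted_mclr_general pplus pminus hppm hpp0 hpm0 k hkm hkpos hkdiff qplus
    qminus hqplus hqminus hqppos hqmpos g hg hscore_p hscore_m hg_sq_p hg_sq_m η J hJ sstar hsstar s
    hsm hs_sq
end
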